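/- For every integer d ≥ 2, every 0 < α < 1, and every index i ∈ {1,…,d}, the series ∑_{n ∈ (ℤ₊)^d} n_i^α/((n₁² + n₂² + ⋯ + n_d²)·n₂·n₃⋯n_d), taken over all d-tuples n = (n₁,…,n_d) of positive integers, converges (is finite). -/

import Mathlib

/-!
With `c = 1 + (1 - α) / d > 1`, each term is bounded by `∏ j, n_j ^ (-c)`, whose sum over
`(ℤ₊)^d` factorises into `d` convergent `p`-series. For the comparison put
`M = √(n₁² + ⋯ + n_d²)`: every `n_j ≤ M`, hence
`n_i ^ α · n₁ · (n₁ ⋯ n_d) ^ ((1 - α) / d) ≤ M ^ α · M · M ^ (1 - α) = M²`,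
and multiplying by `n₂ ⋯ n_d` gives
`n_i ^ α · (n₁ ⋯ n_d) ^ c ≤ (n₁² + ⋯ + n_d²) · n₂ ⋯ n_d`.
-/

open Finset Real

theorem summable_pi_prod_of_nonneg {β : Type*} {d : ℕ} {f : Fin d → β → ℝ}
    (hf : ∀ j b, 0 ≤ f j b) (hs : ∀ j, Summable (f j)) :
    Summable (fun n : Fin d → β => ∏ j, f j (n j)) := by
  induction d with
  | zero => simp [summable_of_hasFiniteSupport (Set.toFinite _)]
  | succ d ih =>
    have htail : Summable (fun m : Fin d → β => ∏ j, f j.succ (m j)) :=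
      ih (fun j => hf j.succ) fun j => hs j.succ
    have hcons : Summable (fun p : β × (Fin d → β) => f 0 p.1 * ∏ j, f j.succ (p.2 j)) := by
      apply (hs 0).mul_of_nonneg htail (hf 0)
      exact fun m => prod_nonneg fun j _ => hf j.succ (m j)
    refine (Equiv.summable_iff (Fin.consEquiv fun _ => β)).mp ?_
    convert hcons using 2 with p
    simp [Fin.consEquiv, Fin.prod_univ_succ]

theorem rpow_mul_mul_prod_rpow_le_sum_sq {ι : Type*} [Fintype ι] {x : ι → ℝ}
    (hx : ∀ j, 0 ≤ x j) {α : ℝ} (h0 : 0 ≤ α) (h1 : α ≤ 1) (i k : ι) :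
    x i ^ α * x k * (∏ j, x j) ^ ((1 - α) / Fintype.card ι) ≤ ∑ j, x j ^ 2 := by
  set M := √(∑ j, x j ^ 2)
  have hM : 0 ≤ M := sqrt_nonneg _
  have hxM (j : ι) : x j ≤ M :=
    le_sqrt_of_sq_le (single_le_sum (fun j _ => sq_nonneg (x j)) (mem_univ j))
  have hcard : (Fintype.card ι : ℝ) ≠ 0 :=
    (Nat.cast_pos.mpr (Fintype.card_pos_iff.mpr ⟨i⟩)).ne'
  have hi : x i ^ α ≤ M ^ α := rpow_le_rpow (hx i) (hxM i) h0
  have hk : x k ≤ M := hxM k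
  have hprod : (∏ j, x j) ^ ((1 - α) / Fintype.card ι) ≤ M ^ (1 - α) := calc
    _ ≤ (M ^ Fintype.card ι) ^ ((1 - α) / Fintype.card ι) := by
      refine rpow_le_rpow (prod_nonneg fun j _ => hx j) ?_
        (div_nonneg (sub_nonneg.mpr h1) (Nat.cast_nonneg _))
      exact (prod_le_prod (fun j _ => hx j) fun j _ => hxM j).trans_eq (by simp)
    _ = M ^ (1 - α) := by
      rw [← rpow_natCast, ← rpow_mul hM, mul_div_cancel₀ _ hcard]
  calc x i ^ α * x k * (∏ j, x j) ^ ((1 - α) / Fintype.card ι)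
      ≤ M ^ α * M * M ^ (1 - α) :=
        mul_le_mul (mul_le_mul hi hk (hx k) (rpow_nonneg hM _)) hprod
          (rpow_nonneg (prod_nonneg fun j _ => hx j) _) (mul_nonneg (rpow_nonneg hM _) hM)
    _ = M ^ (2 : ℝ) := by
        rw [mul_right_comm, ← rpow_add' hM (by norm_num), ← rpow_add_one' hM (by norm_num)]
        norm_num
    _ = ∑ j, x j ^ 2 := by
        rw [rpow_two, sq_sqrt (sum_nonneg fun j _ => sq_nonneg (x j))]

theorem rpow_div_sum_sq_mul_prod_erase_le {ι : Type*} [Fintype ι] [DecidableEq ι]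
    {x : ι → ℝ} (hx : ∀ j, 0 < x j) {α : ℝ} (h0 : 0 ≤ α) (h1 : α ≤ 1) (i k : ι) :
    x i ^ α / ((∑ j, x j ^ 2) * ∏ j ∈ univ.erase k, x j) ≤
      ∏ j, x j ^ (-(1 + (1 - α) / Fintype.card ι)) := by
  set P := ∏ j ∈ univ.erase k, x j
  set Q := (∏ j, x j) ^ ((1 - α) / Fintype.card ι)
  have hP : 0 < P := prod_pos fun j _ => hx j
  have hprod : ∏ j, x j = x k * P := (mul_prod_erase univ x (mem_univ k)).symm
  have hQ : 0 < Q := rpow_pos_of_pos (prod_pos fun j _ => hx j) _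
  have hrhs : ∏ j, x j ^ (-(1 + (1 - α) / Fintype.card ι)) = 1 / ((∏ j, x j) * Q) := by
    rw [finsetProd_rpow _ _ (fun j _ => (hx j).le), rpow_neg (prod_nonneg fun j _ => (hx j).le),
      rpow_one_add' (prod_nonneg fun j _ => (hx j).le) (by positivity), one_div]
  have hS : 0 < ∑ j, x j ^ 2 := sum_pos (fun j _ => pow_pos (hx j) 2) ⟨i, mem_univ i⟩
  rw [hrhs, hprod, div_le_div_iff₀ (mul_pos hS hP) (mul_pos (mul_pos (hx k) hP) hQ), one_mul]
  calc x i ^ α * (x k * P * Q) = x i ^ α * x k * Q * P := by ring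
    _ ≤ (∑ j, x j ^ 2) * P :=
      mul_le_mul_of_nonneg_right
        (rpow_mul_mul_prod_rpow_le_sum_sq (fun j => (hx j).le) h0 h1 i k) hP.le

/-- For every `d ≥ 2`, `0 < α < 1`, and coordinate index `i`, the series
`∑_{n ∈ (ℤ₊)^d} n_i^α/((n₁² + ⋯ + n_d²) n₂ ⋯ n_d)` over all `d`-tuples of positive
integers converges, where the product `n₂ ⋯ n_d` ranges over all coordinates
except the first. -/
theorem stmt13 (d : ℕ) (hd : 2 ≤ d) (α : ℝ) (h0 : 0 < α) (h1 : α < 1) (i : Fin d) :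
    Summable (fun n : Fin d → ℕ+ =>
      (((n i : ℕ)) : ℝ) ^ α / ((∑ j, (((n j : ℕ)) : ℝ) ^ 2) *
        ∏ j ∈ Finset.univ.erase (⟨0, by omega⟩ : Fin d), (((n j : ℕ)) : ℝ))) := by
  set c := 1 + (1 - α) / Fintype.card (Fin d)
  have hcard : (0 : ℝ) < Fintype.card (Fin d) :=
    Nat.cast_pos.mpr (Fintype.card_pos_iff.mpr ⟨i⟩)
  have hc : 1 < c := lt_add_of_pos_right 1 (div_pos (sub_pos.mpr h1) hcard)
  have hpow : Summable (fun m : ℕ+ => ((m : ℕ) : ℝ) ^ (-c)) :=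
    summable_pnat_iff_summable_nat.mpr (summable_nat_rpow.mpr (by linarith))
  refine Summable.of_nonneg_of_le (fun n => by positivity)
    (fun n => rpow_div_sum_sq_mul_prod_erase_le (x := fun j => ((n j : ℕ) : ℝ))
      (fun j => by positivity) h0.le h1.le i _)
    (summable_pi_prod_of_nonneg (f := fun (_ : Fin d) (m : ℕ+) => ((m : ℕ) : ℝ) ^ (-c))
      (fun _ m => rpow_nonneg (Nat.cast_nonneg _) _) fun _ => hpow)
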